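/- Let K be a field, r ≥ 2, and let f = a_0 + a_1 X_r + ... + a_m X_r^m and g = b_0 + b_1 X_r + ... + b_n X_r^n be polynomials in K[X_1,...,X_r] with a_0, ..., a_m, b_0, ..., b_n ∈ K[X_1,...,X_{r-1}] and a_0·a_m·b_n ≠ 0. If d_1 divides a_m and d_2 divides b_n in K[X_1,...,X_{r-1}], and for some index j ∈ {1,...,r-1} one has deg_{X_j} a_m > mn·deg_{X_j} d_1 + m²n·deg_{X_j} d_2 + H_j(f), then the polynomial f(X_1,...,X_{r-1}, g(X_1,...,X_r)) has at most Ω(a_m/d_1) + m·Ω(b_n/d_2) irreducible factors over the field K(X_1,...,X_{r-1}), counted with multiplicity. -/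

import Mathlib

/-!
Over `R = K[X₁,…,X_{r-1}]`, Gauss's lemma identifies `Ω(f(g))` over the fraction field with the
number of irreducible factors `Q` of positive degree of `f(g)` in `R[X]`. If `Q(ξ) = 0`, then
`θ = g(ξ)` is a nonzero root of `f` and `lc(Q)ⁿ θ` is integral over `R`; its minimal polynomial is a
monic factor, with nonzero constant term, of `f` with roots scaled by `lc(Q)ⁿ`. Comparing Gauss
norms for the absolute value `exp ∘ deg_{X_j}` at the slope where the leading term `a_m X^m`
dominates gives `deg_{X_j} a_m ≤ H_j(f) + mn · deg_{X_j} lc(Q)`, so `lc(Q)` does not divide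
`d₁ d₂ᵐ`. The leading coefficients of all such `Q` multiply to a divisor of
`a_m b_nᵐ = d₁ d₂ᵐ · e₁ e₂ᵐ`, hence each of them takes up a prime factor of `e₁ e₂ᵐ`.
-/


open Polynomial

/-- Ω(p): number of irreducible factors of `p`, counted with multiplicity. -/
noncomputable def Omega {R : Type*} [CommMonoidWithZero R] [IsCancelMulZero R]
    [UniqueFactorizationMonoid R] (p : R) : ℕ :=
  Multiset.card (UniqueFactorizationMonoid.factors p)

/-- H_j(f) for f = a₀ + a₁Xᵣ + ⋯ + a_d Xᵣ^d with coefficients in K[X₁,…,X_{r-1}]: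
the max over i < d of deg_{X_j} aᵢ. -/
noncomputable def Hj {K : Type*} [Field K] {s : ℕ}
    (a : ℕ → MvPolynomial (Fin s) K) (d : ℕ) (j : Fin s) : ℕ :=
  (Finset.range d).sup fun i => MvPolynomial.degreeOf j (a i)

section Omega

variable {α : Type*} [CommMonoidWithZero α] [UniqueFactorizationMonoid α]

open UniqueFactorizationMonoid

theorem Omega_eq_of_associated {x y : α} (h : Associated x y) : Omega x = Omega y :=
  Multiset.card_eq_card_of_rel (factors_rel_of_associated h)

theorem Omega_mul {x y : α} (hx : x ≠ 0) (hy : y ≠ 0) : Omega (x * y) = Omega x + Omega y := by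
  unfold Omega
  rw [Multiset.card_eq_card_of_rel (factors_mul hx hy), Multiset.card_add]

theorem Omega_pow (x : α) (n : ℕ) : Omega (x ^ n) = n * Omega x := by
  unfold Omega
  rw [Multiset.card_eq_card_of_rel (factors_pow n), Multiset.card_nsmul]

theorem Omega_of_isUnit {x : α} (hx : IsUnit x) : Omega x = 0 := by
  rw [Omega, factors_of_isUnit hx, Multiset.card_zero]

theorem Omega_of_irreducible {x : α} (hx : Irreducible x) : Omega x = 1 :=
  card_factors_of_irreducible hx

theorem Omega_pos {x : α} (hx : x ≠ 0) (hu : ¬IsUnit x) : 0 < Omega x :=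
  Multiset.card_pos.2 (ne_of_gt ((factors_pos hx).2 hu))

theorem Omega_multiset_prod [Nontrivial α] {s : Multiset α} (hs : (0 : α) ∉ s) :
    Omega s.prod = (s.map Omega).sum := by
  induction s using Multiset.induction_on with
  | empty => simpa using Omega_of_isUnit isUnit_one
  | cons x s ih =>
    rw [Multiset.mem_cons, not_or] at hs
    rw [Multiset.prod_cons, Omega_mul (Ne.symm hs.1) (Multiset.prod_ne_zero hs.2),
      ih hs.2, Multiset.map_cons, Multiset.sum_cons]

/-- Each element of `s` needs a prime factor of `E`, since it does not divide `D`. -/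
theorem card_le_Omega_of_prod_dvd_mul [DecompositionMonoid α] {s : Multiset α} {D E : α}
    (hE : E ≠ 0) (hs : s.prod ∣ D * E) (hD : ∀ x ∈ s, ¬x ∣ D) :
    Multiset.card s ≤ Omega E := by
  induction s using Multiset.induction_on generalizing D E with
  | empty => simp
  | cons x s ih =>
    rw [Multiset.prod_cons] at hs
    obtain ⟨x₁, x₂, ⟨D', rfl⟩, ⟨E', rfl⟩, rfl⟩ :=
      exists_dvd_and_dvd_of_dvd_mul (dvd_of_mul_right_dvd hs)
    have hE' : E' ≠ 0 := right_ne_zero_of_mul hE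
    have hx : x₁ * x₂ ≠ 0 := by
      rintro h
      rw [h, zero_mul, zero_dvd_iff, mul_eq_zero, or_iff_left hE] at hs
      exact hD _ (Multiset.mem_cons_self _ _) (by rw [h, hs])
    have hx₂ : ¬IsUnit x₂ := fun hu =>
      hD _ (Multiset.mem_cons_self _ _) ((associated_mul_unit_left x₁ x₂ hu).dvd.trans
        (dvd_mul_right x₁ D'))
    have hs' : s.prod ∣ D' * E' := by
      rw [mul_mul_mul_comm] at hs
      exact (mul_dvd_mul_iff_left hx).1 hs
    have hcard := ih hE' hs' fun y hy hyD => hD y (Multiset.mem_cons_of_mem hy)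
      (hyD.trans (dvd_mul_left D' x₁))
    rw [Multiset.card_cons, Omega_mul (right_ne_zero_of_mul hx) hE']
    have := Omega_pos (right_ne_zero_of_mul hx) hx₂
    omega

end Omega

theorem Multiset.sum_map_ite_one_zero {α : Type*} (s : Multiset α) (p : α → Prop)
    [DecidablePred p] : (s.map fun x => if p x then 1 else 0).sum = card (s.filter p) := by
  induction s using Multiset.induction_on with
  | empty => simp
  | cons a s ih => by_cases h : p a <;> simp [h, ih, add_comm]

open UniqueFactorizationMonoid in
/-- Gauss's lemma: the irreducible factors of positive degree stay irreducible over the fraction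
field, those of degree zero become units. -/
theorem Omega_map_eq_card_filter_factors {R K : Type*} [CommRing R] [IsDomain R]
    [UniqueFactorizationMonoid R] [Field K] [Algebra R K] [IsFractionRing R K]
    {P : R[X]} (hP : P ≠ 0) :
    Omega (P.map (algebraMap R K)) =
      Multiset.card ((factors P).filter fun Q => Q.natDegree ≠ 0) := by
  set φ := algebraMap R K
  have hφ : Function.Injective φ := IsFractionRing.injective R K
  have hprod : Associated ((factors P).map (map φ)).prod (P.map φ) := by
    simpa [← coe_mapRingHom, Multiset.prod_hom] using (factors_prod hP).map (mapRingHom φ)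
  have h0 : (0 : K[X]) ∉ (factors P).map (map φ) := by
    simp only [Multiset.mem_map, Polynomial.map_eq_zero_iff hφ, exists_eq_right]
    exact fun h => (irreducible_of_factor 0 h).ne_zero rfl
  have hΩ : ∀ Q ∈ factors P, Omega (Q.map φ) = if Q.natDegree ≠ 0 then 1 else 0 := by
    intro Q hQ
    have hirr := irreducible_of_factor Q hQ
    split_ifs with hdeg
    · exact Omega_of_irreducible
        ((hirr.isPrimitive hdeg).irreducible_iff_irreducible_map_fraction_map.1 hirr)
    · rw [not_not] at hdeg
      rw [eq_C_of_natDegree_eq_zero hdeg, map_C]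
      refine Omega_of_isUnit (isUnit_C.2 (isUnit_iff_ne_zero.2 ?_))
      rw [map_ne_zero_iff φ hφ]
      exact fun h => hirr.ne_zero (by rw [eq_C_of_natDegree_eq_zero hdeg, h, C_0])
  rw [← Omega_eq_of_associated hprod, Omega_multiset_prod h0, Multiset.map_map,
    Multiset.map_congr (f := Omega ∘ map φ) rfl hΩ]
  exact Multiset.sum_map_ite_one_zero _ _

/-- Writing `F = c * u`, the Gauss norm at `γ` gives
`|lc u| γ ^ deg u ≤ ‖c‖ ‖u‖ = ‖F‖ ≤ |lc u| γ ^ (deg c + deg u)`. -/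
theorem Polynomial.one_le_of_monic_dvd_of_coeff_le_leadingCoeff {R : Type*} [CommRing R]
    {v : AbsoluteValue R ℝ} (hv : IsNonarchimedean v) {γ : ℝ} (hγ : 0 < γ) {c F : R[X]}
    (hc : c.Monic) (hc_deg : 0 < c.natDegree) (hc0 : 1 ≤ v (c.coeff 0)) (hF : F ≠ 0)
    (hcF : c ∣ F) (hdom : ∀ i, v (F.coeff i) * γ ^ i ≤ v F.leadingCoeff * γ ^ F.natDegree) :
    1 ≤ γ := by
  obtain ⟨u, rfl⟩ := hcF
  have hu : u ≠ 0 := right_ne_zero_of_mul hF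
  rw [leadingCoeff_monic_mul hc, hc.natDegree_mul' hu] at hdom
  have hc_norm : 1 ≤ c.gaussNorm v γ := hc0.trans (by simpa using c.le_gaussNorm v hγ.le 0)
  have hu_norm : v u.leadingCoeff * γ ^ u.natDegree ≤ u.gaussNorm v γ :=
    u.le_gaussNorm v hγ.le u.natDegree
  obtain ⟨i, hi⟩ := exists_eq_gaussNorm v γ (c * u)
  have hlead : 0 < v u.leadingCoeff := v.pos (leadingCoeff_ne_zero.2 hu)
  have hpow : γ ^ u.natDegree ≤ γ ^ (c.natDegree + u.natDegree) := by
    refine le_of_mul_le_mul_left ?_ hlead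
    calc v u.leadingCoeff * γ ^ u.natDegree
        ≤ c.gaussNorm v γ * u.gaussNorm v γ :=
          hu_norm.trans (le_mul_of_one_le_left (u.gaussNorm_nonneg v hγ.le) hc_norm)
      _ = v ((c * u).coeff i) * γ ^ i := by rw [← gaussNorm_mul hv hγ, hi]
      _ ≤ _ := hdom i
  by_contra! hγ1
  exact (pow_lt_pow_right_of_lt_one₀ hγ hγ1 (by omega)).not_ge hpow

/-- For a root `ξ` of `Q`, `θ = g(ξ)` is a root of `f`, and `lc(Q) ^ deg g • θ` is integral
because `lc(Q) • ξ` is; take its minimal polynomial. -/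
theorem Polynomial.exists_monic_dvd_scaleRoots_of_dvd_comp {R : Type*} [CommRing R] [IsDomain R]
    [IsIntegrallyClosed R] {f g Q : R[X]} (hf0 : f.coeff 0 ≠ 0) (hQ : 0 < Q.natDegree)
    (hQfg : Q ∣ f.comp g) :
    ∃ c : R[X], c.Monic ∧ 0 < c.natDegree ∧ c.coeff 0 ≠ 0 ∧
      c ∣ f.scaleRoots (Q.leadingCoeff ^ g.natDegree) := by
  let K := FractionRing R
  let L := AlgebraicClosure K
  have : Module.IsTorsionFree R L := .trans_faithfulSMul R K L
  have hinj := FaithfulSMul.algebraMap_injective R L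
  obtain ⟨ξ, hξ⟩ := IsAlgClosed.exists_aeval_eq_zero L Q (natDegree_pos_iff_degree_pos.1 hQ).ne'
  set θ := aeval ξ g
  have hθ : aeval θ f = 0 := by
    obtain ⟨w, hw⟩ := hQfg
    rw [← aeval_comp, hw, map_mul, hξ, zero_mul]
  have hθ0 : θ ≠ 0 := by
    intro h
    rw [h, ← coeff_zero_eq_aeval_zero', map_eq_zero_iff _ hinj] at hθ
    exact hf0 hθ
  set l := Q.leadingCoeff
  set z := algebraMap R L (l ^ g.natDegree) * θ
  have hz : IsIntegral R z := by
    have hlξ : IsIntegral R (l • ξ) := isIntegral_leadingCoeff_smul Q ξ hξ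
    have hz_eq : z = aeval (l • ξ) (g.scaleRoots l) := by
      rw [aeval_def, Algebra.smul_def, scaleRoots_eval₂_mul, ← aeval_def, ← map_pow]
    rw [hz_eq, ← mem_integralClosure_iff]
    simpa [aeval_subalgebra_coe] using (aeval (⟨_, hlξ⟩ : integralClosure R L) (g.scaleRoots l)).2
  have hz0 : z ≠ 0 := mul_ne_zero ((map_ne_zero_iff _ hinj).2
    (pow_ne_zero _ (leadingCoeff_ne_zero.2 (ne_zero_of_natDegree_gt hQ)))) hθ0
  refine ⟨minpoly R z, minpoly.monic hz, minpoly.natDegree_pos hz, fun h => ?_,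
    minpoly.isIntegrallyClosed_dvd hz (scaleRoots_aeval_eq_zero hθ)⟩
  apply minpoly.coeff_zero_ne_zero (hz.tower_top (A := K)) hz0
  rw [minpoly.isIntegrallyClosed_eq_field_fractions' K hz, coeff_map, h, map_zero]

namespace MvPolynomial

variable {σ R : Type*} [CommRing R]

open Classical in
theorem isNonarchimedean_exp_degreeOf (j : σ) :
    IsNonarchimedean fun p : MvPolynomial σ R => if p = 0 then 0 else Real.exp (degreeOf j p) := by
  intro p q
  rcases eq_or_ne p 0 with rfl | hp
  · simp
  rcases eq_or_ne q 0 with rfl | hq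
  · simp
  rcases eq_or_ne (p + q) 0 with hpq | hpq
  · simp only [hpq, hp, if_true, if_false]
    exact le_max_of_le_left (Real.exp_nonneg _)
  simp only [hp, hq, hpq, if_false, ← Real.exp_monotone.map_max, Real.exp_le_exp]
  exact_mod_cast degreeOf_add_le j p q

variable [IsDomain R]

open Classical in
noncomputable def degreeOfAbv (j : σ) : AbsoluteValue (MvPolynomial σ R) ℝ where
  toFun p := if p = 0 then 0 else Real.exp (degreeOf j p)
  map_mul' p q := by
    rcases eq_or_ne p 0 with rfl | hp
    · simp
    rcases eq_or_ne q 0 with rfl | hq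
    · simp
    simp [hp, hq, degreeOf_mul_eq hp hq, Real.exp_add]
  nonneg' p := by
    split_ifs
    · rfl
    · positivity
  eq_zero' p := by split_ifs with h <;> simp [h, Real.exp_ne_zero]
  add_le' p q := (isNonarchimedean_exp_degreeOf j).add_le fun p => by positivity

theorem degreeOfAbv_of_ne_zero (j : σ) {p : MvPolynomial σ R} (hp : p ≠ 0) :
    degreeOfAbv j p = Real.exp (degreeOf j p) := by
  simp [degreeOfAbv, hp]

theorem degreeOfAbv_le (j : σ) (p : MvPolynomial σ R) :
    degreeOfAbv j p ≤ Real.exp (degreeOf j p) := by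
  rcases eq_or_ne p 0 with rfl | hp
  · simp
  · exact (degreeOfAbv_of_ne_zero j hp).le

theorem degreeOf_le_of_dvd (j : σ) {p q : MvPolynomial σ R} (hq : q ≠ 0) (h : p ∣ q) :
    degreeOf j p ≤ degreeOf j q := by
  obtain ⟨c, rfl⟩ := h
  rw [degreeOf_mul_eq (left_ne_zero_of_mul hq) (right_ne_zero_of_mul hq)]
  exact Nat.le_add_right _ _

theorem one_le_degreeOfAbv (j : σ) {p : MvPolynomial σ R} (hp : p ≠ 0) :
    1 ≤ degreeOfAbv j p := by
  rw [degreeOfAbv_of_ne_zero j hp]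
  exact Real.one_le_exp (Nat.cast_nonneg _)

theorem degreeOfAbv_coeff_scaleRoots_mul_le (j : σ) (f : (MvPolynomial σ R)[X])
    (t : MvPolynomial σ R) (κ : ℝ) (i : ℕ) :
    degreeOfAbv j ((f.scaleRoots t).coeff i) * Real.exp κ ^ i ≤
      Real.exp (degreeOf j (f.coeff i) + (f.natDegree - i : ℕ) * degreeOf j t + i * κ) := by
  rw [coeff_scaleRoots, map_mul, map_pow, Real.exp_add, Real.exp_add, Real.exp_nat_mul,
    Real.exp_nat_mul]
  gcongr <;> exact degreeOfAbv_le j _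

theorem degreeOf_leadingCoeff_le_of_monic_dvd_scaleRoots (j : σ)
    {f c : (MvPolynomial σ R)[X]} {t : MvPolynomial σ R} (hc : c.Monic) (hc_deg : 0 < c.natDegree)
    (hc0 : c.coeff 0 ≠ 0) (hcf : c ∣ f.scaleRoots t) {H : ℕ}
    (hH : ∀ i < f.natDegree, degreeOf j (f.coeff i) ≤ H) :
    degreeOf j f.leadingCoeff ≤ H + f.natDegree * degreeOf j t := by
  set m := f.natDegree
  set D := degreeOf j f.leadingCoeff
  set T := degreeOf j t
  by_contra! hlt
  have hf : f ≠ 0 := by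
    rintro rfl
    simp [D] at hlt
  have hF : f.scaleRoots t ≠ 0 := scaleRoots_ne_zero hf t
  have hm : 0 < m := hc_deg.trans_le
    ((natDegree_le_of_dvd hcf hF).trans_eq (natDegree_scaleRoots f t))
  -- the slope at which the leading term of `f.scaleRoots t` just dominates
  set κ : ℝ := T + ((H : ℝ) - D) / m
  have hHD : (H : ℝ) + m * T < D := by exact_mod_cast hlt
  have hHD' : (H : ℝ) < D := by exact_mod_cast (show H < D by omega)
  have hmκ : (m : ℝ) * κ = m * T + H - D := by
    simp only [κ]
    field_simp
    ring
  have hκ : 1 ≤ Real.exp κ := by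
    refine one_le_of_monic_dvd_of_coeff_le_leadingCoeff (isNonarchimedean_exp_degreeOf j)
      (Real.exp_pos κ) hc hc_deg (one_le_degreeOfAbv j hc0) hF hcf fun i => ?_
    rw [leadingCoeff_scaleRoots, natDegree_scaleRoots,
      degreeOfAbv_of_ne_zero j (leadingCoeff_ne_zero.2 hf), ← Real.exp_nat_mul κ m, ← Real.exp_add]
    rcases eq_or_ne (f.coeff i) 0 with hi | hi
    · simp [coeff_scaleRoots, hi, Real.exp_nonneg]
    refine (degreeOfAbv_coeff_scaleRoots_mul_le j f t κ i).trans (Real.exp_le_exp.2 ?_)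
    rcases (le_natDegree_of_ne_zero hi).lt_or_eq with him | rfl
    · have hHi : (degreeOf j (f.coeff i) : ℝ) ≤ H := by exact_mod_cast hH i him
      have hiκ : (i : ℝ) * κ ≤ i * T :=
        mul_le_mul_of_nonneg_left (add_le_of_nonpos_right (div_nonpos_of_nonpos_of_nonneg
          (by linarith) (Nat.cast_nonneg m))) (Nat.cast_nonneg i)
      rw [Nat.cast_sub him.le]
      linarith
    · simp [m]
  have := mul_nonneg (Nat.cast_nonneg m) (Real.one_le_exp_iff.1 hκ)
  linarith

variable [UniqueFactorizationMonoid R]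

theorem degreeOf_leadingCoeff_le_of_dvd_comp (j : σ) {f g Q : (MvPolynomial σ R)[X]}
    (hf0 : f.coeff 0 ≠ 0) (hQ : 0 < Q.natDegree) (hQfg : Q ∣ f.comp g) {H : ℕ}
    (hH : ∀ i < f.natDegree, degreeOf j (f.coeff i) ≤ H) :
    degreeOf j f.leadingCoeff ≤ H + f.natDegree * (g.natDegree * degreeOf j Q.leadingCoeff) := by
  obtain ⟨c, hc, hc_deg, hc0, hcf⟩ := exists_monic_dvd_scaleRoots_of_dvd_comp hf0 hQ hQfg
  have := degreeOf_leadingCoeff_le_of_monic_dvd_scaleRoots j hc hc_deg hc0 hcf hH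
  rwa [degreeOf_pow_eq j _ _ (leadingCoeff_ne_zero.2 (ne_zero_of_natDegree_gt hQ))] at this

open UniqueFactorizationMonoid in
theorem Omega_map_comp_le (j : σ) {f g : (MvPolynomial σ R)[X]} (hf0 : f.coeff 0 ≠ 0)
    (hg : g.natDegree ≠ 0) {d₁ d₂ e₁ e₂ : MvPolynomial σ R} (he₁ : f.leadingCoeff = d₁ * e₁)
    (he₂ : g.leadingCoeff = d₂ * e₂) {H : ℕ} (hH : ∀ i < f.natDegree, degreeOf j (f.coeff i) ≤ H)
    (hdeg : f.natDegree * g.natDegree * degreeOf j d₁ +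
      f.natDegree ^ 2 * g.natDegree * degreeOf j d₂ + H < degreeOf j f.leadingCoeff) :
    Omega ((f.comp g).map (algebraMap _ (FractionRing (MvPolynomial σ R)))) ≤
      Omega e₁ + f.natDegree * Omega e₂ := by
  set m := f.natDegree
  set n := g.natDegree
  have hf_lead : d₁ * e₁ ≠ 0 := by
    rw [← he₁]
    rintro h
    simp [h] at hdeg
  have hg_lead : d₂ * e₂ ≠ 0 :=
    he₂ ▸ leadingCoeff_ne_zero.2 (ne_zero_of_natDegree_gt (Nat.pos_of_ne_zero hg))
  obtain ⟨hd₁, he₁0⟩ := mul_ne_zero_iff.1 hf_lead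
  obtain ⟨hd₂, he₂0⟩ := mul_ne_zero_iff.1 hg_lead
  have hD : d₁ * d₂ ^ m ≠ 0 := mul_ne_zero hd₁ (pow_ne_zero _ hd₂)
  have hE : e₁ * e₂ ^ m ≠ 0 := mul_ne_zero he₁0 (pow_ne_zero _ he₂0)
  have hP_lead : (f.comp g).leadingCoeff = d₁ * d₂ ^ m * (e₁ * e₂ ^ m) := by
    rw [leadingCoeff_comp hg, he₁, he₂]
    ring
  have hP : f.comp g ≠ 0 := fun h => mul_ne_zero hD hE (by rw [← hP_lead, h, leadingCoeff_zero])
  rw [Omega_map_eq_card_filter_factors hP, ← Omega_pow, ← Omega_mul he₁0 (pow_ne_zero _ he₂0),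
    ← Multiset.card_map leadingCoeff]
  refine card_le_Omega_of_prod_dvd_mul (D := d₁ * d₂ ^ m) hE ?_ ?_
  · rw [← leadingCoeff_multiset_prod, ← hP_lead]
    exact leadingCoeff_dvd_leadingCoeff
      ((Multiset.prod_dvd_prod_of_le (Multiset.filter_le _ _)).trans (factors_prod hP).dvd)
  · simp only [Multiset.mem_map, Multiset.mem_filter]
    rintro _ ⟨Q, ⟨hQ, hQ_deg⟩, rfl⟩ hQD
    have hbound := degreeOf_leadingCoeff_le_of_dvd_comp j hf0 (Nat.pos_of_ne_zero hQ_deg)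
      (dvd_of_mem_factors hQ) hH
    have hQl := degreeOf_le_of_dvd j hD hQD
    rw [degreeOf_mul_eq hd₁ (pow_ne_zero _ hd₂), degreeOf_pow_eq j _ _ hd₂] at hQl
    have := Nat.mul_le_mul_left m (Nat.mul_le_mul_left n hQl)
    linarith

end MvPolynomial

namespace Polynomial

variable {R : Type*} [Semiring R]

theorem coeff_sum_range_C_mul_X_pow (a : ℕ → R) (m i : ℕ) :
    (∑ k ∈ Finset.range (m + 1), C (a k) * X ^ k).coeff i = if i ≤ m then a i else 0 := by
  simp

theorem natDegree_sum_range_C_mul_X_pow {a : ℕ → R} {m : ℕ} (ha : a m ≠ 0) :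
    (∑ k ∈ Finset.range (m + 1), C (a k) * X ^ k).natDegree = m :=
  natDegree_eq_of_le_of_coeff_ne_zero
    (natDegree_le_iff_coeff_eq_zero.2 fun i hi => by
      simp [not_le.2 (Nat.cast_lt.1 hi)])
    (by simpa [coeff_sum_range_C_mul_X_pow] using ha)

end Polynomial

theorem stmt6_general {K : Type*} [Field K] (r : ℕ)
    (m n : ℕ) (hn : 0 < n)
    (a b : ℕ → MvPolynomial (Fin (r - 1)) K)
    (d₁ d₂ : MvPolynomial (Fin (r - 1)) K)
    (ha0 : a 0 ≠ 0) (ham : a m ≠ 0) (hbn : b n ≠ 0)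
    (f g : Polynomial (MvPolynomial (Fin (r - 1)) K))
    (hf : f = ∑ i ∈ Finset.range (m + 1), Polynomial.C (a i) * Polynomial.X ^ i)
    (hg : g = ∑ j ∈ Finset.range (n + 1), Polynomial.C (b j) * Polynomial.X ^ j)
    (j : Fin (r - 1))
    (hdeg : MvPolynomial.degreeOf j (a m) >
      m * n * MvPolynomial.degreeOf j d₁ + m ^ 2 * n * MvPolynomial.degreeOf j d₂
        + Hj a m j)
    (e₁ e₂ : MvPolynomial (Fin (r - 1)) K) (he₁ : a m = d₁ * e₁) (he₂ : b n = d₂ * e₂) :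
    Omega ((Polynomial.aeval g f).map
        (algebraMap (MvPolynomial (Fin (r - 1)) K)
          (FractionRing (MvPolynomial (Fin (r - 1)) K))))
      ≤ Omega e₁ + m * Omega e₂ := by
  have hf_deg : f.natDegree = m := hf ▸ natDegree_sum_range_C_mul_X_pow ham
  have hg_deg : g.natDegree = n := hg ▸ natDegree_sum_range_C_mul_X_pow hbn
  have hf_coeff : ∀ i ≤ m, f.coeff i = a i := fun i hi => by
    rw [hf, coeff_sum_range_C_mul_X_pow, if_pos hi]
  have hg_lead : g.leadingCoeff = b n := by
    rw [leadingCoeff, hg_deg, hg, coeff_sum_range_C_mul_X_pow, if_pos le_rfl]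
  rw [← comp_eq_aeval, ← hf_deg]
  refine MvPolynomial.Omega_map_comp_le j (H := Hj a m j) (by rwa [hf_coeff 0 (Nat.zero_le m)])
    (hg_deg ▸ hn.ne') (by rw [leadingCoeff, hf_deg, hf_coeff m le_rfl, he₁])
    (by rw [hg_lead, he₂]) (fun i hi => ?_) ?_
  · rw [hf_deg] at hi
    rw [hf_coeff i hi.le]
    exact Finset.le_sup (f := fun i => MvPolynomial.degreeOf j (a i)) (Finset.mem_range.2 hi)
  · rwa [hf_deg, hg_deg, leadingCoeff, hf_deg, hf_coeff m le_rfl]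

theorem stmt6 {K : Type*} [Field K] (r : ℕ) (hr : 2 ≤ r)
    (m n : ℕ) (hm : 0 < m) (hn : 0 < n)
    (a b : ℕ → MvPolynomial (Fin (r - 1)) K)
    (d₁ d₂ : MvPolynomial (Fin (r - 1)) K)
    (ha0 : a 0 ≠ 0) (ham : a m ≠ 0) (hbn : b n ≠ 0)
    (hd₁ : d₁ ∣ a m) (hd₂ : d₂ ∣ b n)
    (f g : Polynomial (MvPolynomial (Fin (r - 1)) K))
    (hf : f = ∑ i ∈ Finset.range (m + 1), Polynomial.C (a i) * Polynomial.X ^ i)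
    (hg : g = ∑ j ∈ Finset.range (n + 1), Polynomial.C (b j) * Polynomial.X ^ j)
    (j : Fin (r - 1))
    (hdeg : MvPolynomial.degreeOf j (a m) >
      m * n * MvPolynomial.degreeOf j d₁ + m ^ 2 * n * MvPolynomial.degreeOf j d₂
        + Hj a m j)
    (e₁ e₂ : MvPolynomial (Fin (r - 1)) K) (he₁ : a m = d₁ * e₁) (he₂ : b n = d₂ * e₂) :
    Omega ((Polynomial.aeval g f).map
        (algebraMap (MvPolynomial (Fin (r - 1)) K)
          (FractionRing (MvPolynomial (Fin (r - 1)) K))))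
      ≤ Omega e₁ + m * Omega e₂ :=
  stmt6_general r m n hn a b d₁ d₂ ha0 ham hbn f g hf hg j hdeg e₁ e₂ he₁ he₂
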